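/- For |t| < 1, the hypergeometric-type integral (1/π) ∫₀¹ dx/√(x(1-x)(1-tx)) equals the power series ∑_{k≥0} C(2k,k)² (t/16)^k. -/

import Mathlib

/-!
Newton's binomial series gives `(1 - u)^(-1/2) = ∑ C(2k,k) (u/4)^k`, its coefficients
`binom(k - 1/2, k) = (1/2)(3/2)⋯(k - 1/2) / k!` being `C(2k,k)/4^k`. Expanding `(1 - t x)^(-1/2)`
in this way and integrating term by term against the arcsine weight `x^(-1/2) (1 - x)^(-1/2)`,
the `k`-th term is `C(2k,k)/4^k · t^k` times the Beta integral
`B(k + 1/2, 1/2) = Γ(k + 1/2) Γ(1/2) / k! = π C(2k,k)/4^k`. Dominated convergence applies with the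
majorant `|t|^k x^(-1/2) (1 - x)^(-1/2)`.
-/

open Real Nat MeasureTheory

theorem Real.Gamma_add_nat_eq_ascPochhammer_mul {s : ℝ} (hs : ∀ m : ℕ, s ≠ -m) (n : ℕ) :
    Gamma (s + n) = (ascPochhammer ℝ n).eval s * Gamma s := by
  induction n with
  | zero => simp
  | succ n ih =>
    have hsn : s + n ≠ 0 := fun h => hs n (by linarith)
    rw [Nat.cast_succ, ← add_assoc, Gamma_add_one hsn, ih, ascPochhammer_succ_eval]
    ring

theorem Complex.ofReal_rpow_mul_one_sub_rpow {x : ℝ} (hx : x ∈ Set.Icc (0 : ℝ) 1) (a b : ℝ) :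
    ((x ^ (a - 1) * (1 - x) ^ (b - 1) : ℝ) : ℂ) =
      (x : ℂ) ^ ((a : ℂ) - 1) * (1 - (x : ℂ)) ^ ((b : ℂ) - 1) := by
  rw [ofReal_mul, ofReal_cpow hx.1, ofReal_cpow (sub_nonneg.2 hx.2)]
  push_cast
  rfl

namespace Real

theorem intervalIntegrable_rpow_mul_one_sub_rpow {a b : ℝ} (ha : 0 < a) (hb : 0 < b) :
    IntervalIntegrable (fun x => x ^ (a - 1) * (1 - x) ^ (b - 1)) volume 0 1 := by
  refine (Complex.betaIntegral_convergent (u := a) (v := b) (by simpa) (by simpa)).norm.congr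
    fun x hx => ?_
  obtain ⟨hx0, hx1⟩ : x ∈ Set.Icc (0 : ℝ) 1 :=
    Set.Ioc_subset_Icc_self (Set.uIoc_of_le (zero_le_one' ℝ) ▸ hx)
  simp only [← Complex.ofReal_rpow_mul_one_sub_rpow ⟨hx0, hx1⟩, Complex.norm_real,
    Real.norm_eq_abs]
  exact abs_of_nonneg (mul_nonneg (rpow_nonneg hx0 _) (rpow_nonneg (sub_nonneg.2 hx1) _))

theorem integral_rpow_mul_one_sub_rpow {a b : ℝ} (ha : 0 < a) (hb : 0 < b) :
    ∫ x in (0 : ℝ)..1, x ^ (a - 1) * (1 - x) ^ (b - 1) = Gamma a * Gamma b / Gamma (a + b) := by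
  have h := Complex.betaIntegral_eq_Gamma_mul_div a b (by simpa) (by simpa)
  rw [Complex.betaIntegral, ← intervalIntegral.integral_congr fun x hx =>
    Complex.ofReal_rpow_mul_one_sub_rpow (Set.uIcc_of_le (zero_le_one' ℝ) ▸ hx) a b,
    intervalIntegral.integral_ofReal, ← Complex.ofReal_add] at h
  simp only [Complex.Gamma_ofReal] at h
  exact_mod_cast h

end Real

theorem ascPochhammer_eval_one_half (k : ℕ) :
    (ascPochhammer ℝ k).eval (1 / 2) = k ! * centralBinom k / 4 ^ k := by
  induction k with
  | zero => simp
  | succ k ih =>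
    have h : ((k + 1 : ℕ) : ℝ) * centralBinom (k + 1) = 2 * (2 * k + 1) * centralBinom k := by
      exact_mod_cast succ_mul_centralBinom_succ k
    rw [ascPochhammer_succ_eval, ih, factorial_succ, Nat.cast_mul, mul_comm ((k + 1 : ℕ) : ℝ),
      mul_assoc, h, pow_succ]
    field_simp
    ring

theorem Ring.choose_one_half_add_sub_one (k : ℕ) :
    Ring.choose ((1 / 2 : ℝ) + k - 1) k = centralBinom k / 4 ^ k := by
  have h := Ring.factorial_nsmul_multichoose_eq_ascPochhammer (1 / 2 : ℝ) k
  rw [Polynomial.ascPochhammer_smeval_eq_eval, ascPochhammer_eval_one_half, Ring.multichoose_eq,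
    nsmul_eq_mul, mul_div_assoc] at h
  exact mul_left_cancel₀ (by positivity) h

theorem hasSum_centralBinom_div_four_pow_mul_pow {u : ℝ} (hu : |u| < 1) :
    HasSum (fun k => (centralBinom k : ℝ) / 4 ^ k * u ^ k) (1 / √(1 - u)) := by
  have h := (one_div_one_sub_rpow_hasFPowerSeriesOnBall_zero (1 / 2)).hasSum
    (y := u) (by simpa [Real.enorm_eq_ofReal_abs] using hu)
  simp only [FormalMultilinearSeries.ofScalars_apply_eq, Ring.choose_one_half_add_sub_one,
    smul_eq_mul, zero_add] at h
  simpa [Real.sqrt_eq_rpow] using h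

theorem integral_rpow_nat_add_half_mul_one_sub_rpow_half (k : ℕ) :
    ∫ x in (0 : ℝ)..1, x ^ ((k + 1 / 2 : ℝ) - 1) * (1 - x) ^ ((1 / 2 : ℝ) - 1) =
      π * centralBinom k / 4 ^ k := by
  have hhalf : ∀ m : ℕ, (1 / 2 : ℝ) ≠ -m := fun m h => by
    have : (0 : ℝ) ≤ m := m.cast_nonneg
    linarith
  have hπ : Gamma (1 / 2) * Gamma (1 / 2) = π := by
    rw [Gamma_one_half_eq, mul_self_sqrt pi_pos.le]
  rw [integral_rpow_mul_one_sub_rpow (by positivity) (by positivity), add_comm (k : ℝ),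
    Gamma_add_nat_eq_ascPochhammer_mul hhalf, add_right_comm, add_halves, add_comm (1 : ℝ),
    Gamma_nat_eq_factorial, ascPochhammer_eval_one_half, mul_assoc _ (Gamma (1 / 2)), hπ]
  field_simp

noncomputable def legendreTerm (t : ℝ) (k : ℕ) (x : ℝ) : ℝ :=
  centralBinom k / 4 ^ k * t ^ k * (x ^ ((k + 1 / 2 : ℝ) - 1) * (1 - x) ^ ((1 / 2 : ℝ) - 1))

theorem hasSum_legendreTerm {t x : ℝ} (ht : |t| < 1) (hx : x ∈ Set.Ioo (0 : ℝ) 1) :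
    HasSum (fun k => legendreTerm t k x) (1 / √(x * (1 - x) * (1 - t * x))) := by
  obtain ⟨hx0, hx1⟩ := hx
  have htx : |t * x| < 1 := by
    rw [abs_mul, abs_of_pos hx0]
    nlinarith [abs_nonneg t]
  have h := (hasSum_centralBinom_div_four_pow_mul_pow htx).mul_right
    (x ^ ((1 / 2 : ℝ) - 1) * (1 - x) ^ ((1 / 2 : ℝ) - 1))
  have hweight :
      x ^ ((1 / 2 : ℝ) - 1) * (1 - x) ^ ((1 / 2 : ℝ) - 1) = 1 / (√x * √(1 - x)) := by
    rw [show (1 / 2 : ℝ) - 1 = -(1 / 2) by norm_num, rpow_neg hx0.le, rpow_neg (by linarith),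
      ← sqrt_eq_rpow, ← sqrt_eq_rpow, one_div, mul_inv]
  have hval : 1 / √(x * (1 - x) * (1 - t * x)) =
      1 / √(1 - t * x) * (x ^ ((1 / 2 : ℝ) - 1) * (1 - x) ^ ((1 / 2 : ℝ) - 1)) := by
    rw [hweight, sqrt_mul (by nlinarith), sqrt_mul hx0.le]
    field_simp
  rw [hval]
  refine h.congr_fun fun k => ?_
  rw [legendreTerm, add_sub_assoc, rpow_add hx0, rpow_natCast]
  ring

theorem norm_legendreTerm_le {t x : ℝ} (hx : x ∈ Set.Ioc (0 : ℝ) 1) (k : ℕ) :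
    ‖legendreTerm t k x‖ ≤ |t| ^ k * (x ^ ((1 / 2 : ℝ) - 1) * (1 - x) ^ ((1 / 2 : ℝ) - 1)) := by
  obtain ⟨hx0, hx1⟩ := hx
  have hcoeff : (centralBinom k : ℝ) / 4 ^ k ≤ 1 :=
    div_le_one_of_le₀ (mod_cast centralBinom_le_four_pow k) (by positivity)
  have hpow : x ^ ((k + 1 / 2 : ℝ) - 1) ≤ x ^ ((1 / 2 : ℝ) - 1) :=
    rpow_le_rpow_of_exponent_ge hx0 hx1 (by linarith [k.cast_nonneg (α := ℝ)])
  have h1x : 0 ≤ 1 - x := sub_nonneg.2 hx1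
  rw [legendreTerm, Real.norm_eq_abs, abs_mul, abs_mul, abs_pow, abs_of_nonneg (by positivity),
    abs_of_nonneg (mul_nonneg (rpow_nonneg hx0.le _) (rpow_nonneg h1x _))]
  calc (centralBinom k : ℝ) / 4 ^ k * |t| ^ k *
        (x ^ ((k + 1 / 2 : ℝ) - 1) * (1 - x) ^ ((1 / 2 : ℝ) - 1))
      ≤ 1 * |t| ^ k * (x ^ ((1 / 2 : ℝ) - 1) * (1 - x) ^ ((1 / 2 : ℝ) - 1)) := by gcongr
    _ = |t| ^ k * (x ^ ((1 / 2 : ℝ) - 1) * (1 - x) ^ ((1 / 2 : ℝ) - 1)) := by rw [one_mul]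

theorem integral_legendreTerm (t : ℝ) (k : ℕ) :
    ∫ x in (0 : ℝ)..1, legendreTerm t k x =
      centralBinom k / 4 ^ k * t ^ k * (π * centralBinom k / 4 ^ k) := by
  simp only [legendreTerm, intervalIntegral.integral_const_mul,
    integral_rpow_nat_add_half_mul_one_sub_rpow_half]

theorem hasSum_integral_legendreTerm {t : ℝ} (ht : |t| < 1) :
    HasSum (fun k => ∫ x in (0 : ℝ)..1, legendreTerm t k x)
      (∫ x in (0 : ℝ)..1, 1 / √(x * (1 - x) * (1 - t * x))) := by
  have hweight := intervalIntegrable_rpow_mul_one_sub_rpow (one_half_pos (α := ℝ)) one_half_pos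
  refine intervalIntegral.hasSum_integral_of_dominated_convergence
    (fun k x => |t| ^ k * (x ^ ((1 / 2 : ℝ) - 1) * (1 - x) ^ ((1 / 2 : ℝ) - 1)))
    (fun k => ((intervalIntegrable_rpow_mul_one_sub_rpow (by positivity) one_half_pos).const_mul
      _).def'.aestronglyMeasurable) ?_ ?_ ?_ ?_
  · exact fun k => .of_forall fun x hx =>
      norm_legendreTerm_le (Set.uIoc_of_le (zero_le_one' ℝ) ▸ hx) k
  · exact .of_forall fun x _ => (summable_geometric_of_lt_one (abs_nonneg t) ht).mul_right _
  · simp only [tsum_mul_right, tsum_geometric_of_lt_one (abs_nonneg t) ht]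
    exact hweight.const_mul _
  · filter_upwards [Measure.ae_ne volume 1] with x hx1 hx
    rw [Set.uIoc_of_le (zero_le_one' ℝ)] at hx
    exact hasSum_legendreTerm ht ⟨hx.1, lt_of_le_of_ne hx.2 hx1⟩

theorem legendre_integral_eq_series (t : ℝ) (ht : |t| < 1) :
    (1 / Real.pi) * ∫ x in (0:ℝ)..1, 1 / Real.sqrt (x * (1 - x) * (1 - t * x))
      = ∑' k : ℕ, ((Nat.choose (2 * k) k : ℝ))^2 * (t / 16)^k := by
  rw [← (hasSum_integral_legendreTerm ht).tsum_eq, ← tsum_mul_left]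
  congr 1 with k
  rw [integral_legendreTerm, ← centralBinom_eq_two_mul_choose, div_pow,
    show (16 : ℝ) = 4 * 4 by norm_num, mul_pow]
  field_simp
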